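/- The Q5 configuration, obtained from the D5 root system by replacing each of the 10 roots v with coordinate sum 2 by the reflection across the hyperplane of coordinate-sum-0 of its antipode -v (i.e., by the vector obtained from -v by adding 4/5 to each coordinate), is a kissing configuration: all 40 points have squared norm 2 and distinct points have inner product at most 1. -/
import Mathlib


/-- The D5 root system: vectors in ℝ^5 with exactly two nonzero coordinates, each ±1. -/
def D5 : Set (Fin 5 → ℝ) :=
  {v | (∀ i, v i = -1 ∨ v i = 0 ∨ v i = 1) ∧
    (Finset.univ.filter fun i => v i ≠ 0).card = 2}

lemma d5_norm {v : Fin 5 → ℝ} (hv : v ∈ D5) : ∑ i, v i * v i = 2 := by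
  have h1 : ∑ i, v i * v i
      = ∑ i ∈ Finset.univ.filter (fun i => v i ≠ 0), v i * v i := by
    rw [Finset.sum_filter_of_ne]
    intro i _ h
    exact fun h0 => h (by rw [h0]; ring)
  have h2 : ∑ i ∈ Finset.univ.filter (fun i => v i ≠ 0), v i * v i
      = ∑ i ∈ Finset.univ.filter (fun i => v i ≠ 0), (1:ℝ) := by
    apply Finset.sum_congr rfl
    intro i hi
    simp only [Finset.mem_filter] at hi
    rcases hv.1 i with h | h | h
    · rw [h]; ring
    · exact absurd h hi.2
    · rw [h]; ring
  rw [h1, h2, Finset.sum_const, hv.2]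
  norm_num

lemma d5_sum_sq {v : Fin 5 → ℝ} (hv : v ∈ D5) : ∑ i, (v i)^2 = 2 := by
  simpa [sq] using d5_norm hv

lemma d5_neg {u : Fin 5 → ℝ} (hu : u ∈ D5) : (fun i => -u i) ∈ D5 := by
  constructor
  · intro i
    rcases hu.1 i with h | h | h <;> simp [h]
  · have : (Finset.univ.filter fun i => -u i ≠ 0)
        = (Finset.univ.filter fun i => u i ≠ 0) := by
      apply Finset.filter_congr
      intro i _
      simp
    rw [this]; exact hu.2

lemma d5_inner {u v : Fin 5 → ℝ} (hu : u ∈ D5) (hv : v ∈ D5) (hne : u ≠ v) :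
    ∑ i, u i * v i ≤ 1 := by
  -- strict bound < 2
  have hlt : ∑ i, u i * v i < 2 := by
    have hpos : 0 < ∑ i, (u i - v i)^2 := by
      obtain ⟨j, hj⟩ : ∃ j, u j ≠ v j := by
        by_contra h
        push_neg at h
        exact hne (funext h)
      apply Finset.sum_pos'
      · intro i _; positivity
      · refine ⟨j, Finset.mem_univ j, ?_⟩
        have hj' : u j - v j ≠ 0 := sub_ne_zero.mpr hj
        positivity
    have hexp : ∑ i, (u i - v i)^2
        = ∑ i, (u i)^2 + ∑ i, (v i)^2 - 2 * ∑ i, u i * v i := by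
      rw [← Finset.sum_add_distrib, Finset.mul_sum, ← Finset.sum_sub_distrib]
      apply Finset.sum_congr rfl
      intro i _; ring
    rw [hexp, d5_sum_sq hu, d5_sum_sq hv] at hpos
    linarith
  -- integrality
  have hint : ∀ i, ∃ n : ℤ, (n : ℝ) = u i * v i := by
    intro i
    have h3 : u i * v i = -1 ∨ u i * v i = 0 ∨ u i * v i = 1 := by
      rcases hu.1 i with h1 | h1 | h1 <;> rcases hv.1 i with h2 | h2 | h2 <;>
        rw [h1, h2] <;> norm_num
    rcases h3 with h | h | h
    · exact ⟨-1, by rw [h]; norm_num⟩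
    · exact ⟨0, by rw [h]; norm_num⟩
    · exact ⟨1, by rw [h]; norm_num⟩
  choose k hk using hint
  have hsum : ((∑ i, k i : ℤ) : ℝ) = ∑ i, u i * v i := by
    push_cast
    exact Finset.sum_congr rfl fun i _ => hk i
  rw [← hsum] at hlt ⊢
  have : (∑ i, k i : ℤ) < 2 := by exact_mod_cast hlt
  have : (∑ i, k i : ℤ) ≤ 1 := by omega
  exact_mod_cast this

/-- Szöllősi's configuration `Q5`: keep the roots of coordinate sum `0` and `-2`, and
replace each root `u` of coordinate sum `2` by the reflection of its antipode `-u`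
across the hyperplane of coordinate sum `0` (which adds `4/5` to each coordinate of `-u`). -/
def Q5 : Set (Fin 5 → ℝ) :=
  {v | v ∈ D5 ∧ ∑ i, v i ≤ 0} ∪
  {v | ∃ u ∈ D5, (∑ i, u i) = 2 ∧ v = fun i => -u i + 4/5}


lemma shift_norm {u : Fin 5 → ℝ} (hu : u ∈ D5) (hs : ∑ i, u i = 2) :
    ∑ i, (-u i + 4/5) * (-u i + 4/5) = 2 := by
  have h : ∑ i, (-u i + 4/5) * (-u i + 4/5)
      = ∑ i, (u i * u i - 8/5 * u i + 16/25) := by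
    apply Finset.sum_congr rfl; intro i _; ring
  rw [h, Finset.sum_add_distrib, Finset.sum_sub_distrib, ← Finset.mul_sum,
    d5_norm hu, hs, Finset.sum_const]
  norm_num

lemma mixed_inner {v u : Fin 5 → ℝ} (hv : v ∈ D5) (hvs : ∑ i, v i ≤ 0)
    (hu : u ∈ D5) (hus : ∑ i, u i = 2) :
    ∑ i, v i * (-u i + 4/5) ≤ 1 := by
  have hexp : ∑ i, v i * (-u i + 4/5)
      = ∑ i, v i * (-u i) + 4/5 * ∑ i, v i := by
    rw [Finset.mul_sum, ← Finset.sum_add_distrib]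
    apply Finset.sum_congr rfl; intro i _; ring
  rw [hexp]
  by_cases hveq : v = fun i => -u i
  · have h2 : ∑ i, v i * (-u i) = ∑ i, u i * u i := by
      apply Finset.sum_congr rfl; intro i _; rw [hveq]; ring
    have h3 : ∑ i, v i = -∑ i, u i := by
      rw [hveq, ← Finset.sum_neg_distrib]
    rw [h2, h3, d5_norm hu, hus]
    norm_num
  · have h2 : ∑ i, v i * (-u i) ≤ 1 := by
      have := d5_inner hv (d5_neg hu) hveq
      simpa using this
    nlinarith

lemma shift_shift {a b : Fin 5 → ℝ} (ha : a ∈ D5) (hb : b ∈ D5)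
    (has : ∑ i, a i = 2) (hbs : ∑ i, b i = 2) (hne : a ≠ b) :
    ∑ i, (-a i + 4/5) * (-b i + 4/5) ≤ 1 := by
  have h : ∑ i, (-a i + 4/5) * (-b i + 4/5)
      = ∑ i, (a i * b i - 4/5 * a i - 4/5 * b i + 16/25) := by
    apply Finset.sum_congr rfl; intro i _; ring
  rw [h, Finset.sum_add_distrib, Finset.sum_sub_distrib, Finset.sum_sub_distrib,
    ← Finset.mul_sum, ← Finset.mul_sum, has, hbs, Finset.sum_const]
  have := d5_inner ha hb hne
  simp only [Finset.card_univ, Fintype.card_fin, nsmul_eq_mul]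
  linarith

theorem stmt9 :
    (∀ v ∈ Q5, ∑ i, v i * v i = 2) ∧
    (∀ u ∈ Q5, ∀ v ∈ Q5, u ≠ v → ∑ i, u i * v i ≤ 1) := by
  constructor
  · rintro v (⟨hv, _⟩ | ⟨u, hu, hus, rfl⟩)
    · exact d5_norm hv
    · exact shift_norm hu hus
  · rintro u (⟨hu, hus⟩ | ⟨a, ha, has, rfl⟩) v (⟨hv, hvs⟩ | ⟨b, hb, hbs, rfl⟩) hne
    · exact d5_inner hu hv hne
    · exact mixed_inner hu hus hb hbs
    · have h : ∑ i, (-a i + 4/5) * v i = ∑ i, v i * (-a i + 4/5) := by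
        apply Finset.sum_congr rfl; intro i _; ring
      rw [h]
      exact mixed_inner hv hvs ha has
    · apply shift_shift ha hb has hbs
      intro hab
      exact hne (by rw [hab])
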